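/- arXiv:2310.09973 — 2 statements merged into one kernel-verified Lean document; each statement's English description precedes it below -/
import Mathlib

section
/- Let k ≥ 2 and let H₁, …, H_k be pairwise disjoint finite sets with union H = H₁ ∪ ⋯ ∪ H_k. If |H| is even and 2|Hᵢ| < |H| for every i ∈ {1, …, k}, then the elements of H can be partitioned into pairs such that no two elements of any pair belong to the same set Hᵢ. Equivalently, there exists a fixed-point-free involution f : H → H such that for every x ∈ H and every i, if x ∈ Hᵢ then f(x) ∉ Hᵢ. -/
open SimpleGraph
open scoped Classical

/-- A (total) edge coloring `c` with `n` colors is proper on the edge set `E₀ ⊆ G.edgeSet`: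
any two distinct edges of `E₀` sharing a vertex receive different colors. -/
def IsProperEdgeColoringOn {V : Type*} (G : SimpleGraph V) (E₀ : Set (Sym2 V)) {n : ℕ}
    (c : Sym2 V → Fin n) : Prop :=
  E₀ ⊆ G.edgeSet ∧
    ∀ e ∈ E₀, ∀ f ∈ E₀, e ≠ f → (∃ v, v ∈ e ∧ v ∈ f) → c e ≠ c f

/-- A proper edge coloring of `G` with `n` colors: any two distinct edges of `G`
sharing a vertex receive different colors. -/
def IsProperEdgeColoring {V : Type*} (G : SimpleGraph V) {n : ℕ} (c : Sym2 V → Fin n) : Prop :=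
  ∀ e ∈ G.edgeSet, ∀ f ∈ G.edgeSet, e ≠ f → (∃ v, v ∈ e ∧ v ∈ f) → c e ≠ c f

/-- The distance between edges `e` and `f` of `G` is at least `k`:
every endpoint of `e` is at (extended) graph distance at least `k` from every endpoint of `f`. -/
def EdgeDistGE {V : Type*} (G : SimpleGraph V) (e f : Sym2 V) (k : ℕ) : Prop :=
  ∀ x ∈ e, ∀ y ∈ f, (k : ℕ∞) ≤ G.edist x y

/-- The chromatic index of `G`: the least `n` such that `G` admits a proper edge coloring
with `n` colors. -/
noncomputable def chromIndex {V : Type*} (G : SimpleGraph V) : ℕ :=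
  sInf {n | ∃ c : Sym2 V → Fin n, IsProperEdgeColoring G c}

/-- A finite graph is Class 1 if its chromatic index equals its maximum degree. -/
def IsClassOne {V : Type*} [Fintype V] (G : SimpleGraph V) : Prop :=
  chromIndex G = G.maxDegree

/-- The iterated Cartesian (box) product of the family of graphs `G i`. -/
def boxProdPi {ι : Type*} {V : ι → Type*} (G : ∀ i, SimpleGraph (V i)) :
    SimpleGraph (∀ i, V i) where
  Adj x y := ∃ i, (G i).Adj (x i) (y i) ∧ ∀ j, j ≠ i → x j = y j
  symm := ⟨fun x y ⟨i, ha, he⟩ => ⟨i, ha.symm, fun j hj => (he j hj).symm⟩⟩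
  loopless := ⟨fun x ⟨i, ha, _⟩ => (G i).loopless.irrefl _ ha⟩

/-- The `d`-fold iterated Cartesian (box) product of `G` with itself. -/
def boxPow {V : Type*} (G : SimpleGraph V) (d : ℕ) : SimpleGraph (Fin d → V) :=
  boxProdPi fun _ => G

/-!
Write `|H| = 2m` and list the elements of `H` class by class, so that each `Hᵢ` occupies an
interval of the positions `0, …, 2m - 1`, and pair the element at position `p` with the one at
position `p + m (mod 2m)`. The two members of a pair are exactly `m` positions apart, while two
positions inside the same interval are less than `|Hᵢ| < m` apart.
-/

open Function

def halfTurn {m : ℕ} (p : Fin (2 * m)) : Fin (2 * m) :=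
  ⟨(p + m) % (2 * m), Nat.mod_lt _ p.pos⟩

lemma halfTurn_add_or {m : ℕ} (p : Fin (2 * m)) :
    (p : ℕ) + m = halfTurn p ∨ (halfTurn p : ℕ) + m = p := by
  have hp := p.isLt
  simp only [halfTurn]
  rcases lt_or_ge ((p : ℕ) + m) (2 * m) with h | h
  · rw [Nat.mod_eq_of_lt h]
    exact Or.inl rfl
  · rw [Nat.mod_eq_sub_mod h, Nat.mod_eq_of_lt (by omega)]
    omega

lemma halfTurn_involutive {m : ℕ} : Involutive (halfTurn (m := m)) := fun p => by
  have := halfTurn_add_or p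
  have := halfTurn_add_or (halfTurn p)
  have := (halfTurn (halfTurn p)).isLt
  exact Fin.ext (by omega)

lemma halfTurn_ne {m : ℕ} (p : Fin (2 * m)) : halfTurn p ≠ p := fun h => by
  have := halfTurn_add_or p
  have := p.isLt
  rw [h] at *
  omega

theorem exists_involutive_color_ne_of_equiv_fin {β ι : Type*} (c : β → ι) {m : ℕ}
    (e : β ≃ Fin (2 * m)) (hclose : ∀ b b', c b = c b' → (e b : ℕ) < e b' + m) :
    ∃ g : β → β, Involutive g ∧ (∀ b, g b ≠ b) ∧ ∀ b, c (g b) ≠ c b := by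
  refine ⟨e.symm ∘ halfTurn ∘ e, fun b => ?_, fun b h => ?_, fun b h => ?_⟩
  · simp [halfTurn_involutive _]
  · exact halfTurn_ne (e b) (e.symm_apply_eq.mp h)
  · have h₁ := hclose _ _ h
    have h₂ := hclose _ _ h.symm
    simp only [comp_apply, Equiv.apply_symm_apply] at h₁ h₂
    have := halfTurn_add_or (e b)
    omega

theorem exists_equiv_fin_fiber_interval {β : Type*} [Fintype β] {k : ℕ} (c : β → Fin k) :
    ∃ e : β ≃ Fin (Fintype.card β), ∀ i, ∃ a, ∀ b, c b = i →
      a ≤ (e b : ℕ) ∧ (e b : ℕ) < a + Fintype.card {x // c x = i} := by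
  let e₀ : β ≃ Fin (∑ i, Fintype.card {x // c x = i}) :=
    (Equiv.sigmaFiberEquiv c).symm.trans
      ((Equiv.sigmaCongrRight fun i => Fintype.equivFin _).trans finSigmaFinEquiv)
  have hcard : ∑ i, Fintype.card {x // c x = i} = Fintype.card β := by
    simpa using (Fintype.card_congr e₀).symm
  refine ⟨e₀.trans (finCongr hcard), fun i =>
    ⟨∑ j : Fin i, Fintype.card {x // c x = Fin.castLE i.2.le j}, fun b hb => ?_⟩⟩
  subst hb
  have := (Fintype.equivFin {x // c x = c b} ⟨b, rfl⟩).isLt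
  simp only [e₀, Equiv.trans_apply, finCongr_apply, Fin.val_cast, Equiv.sigmaCongrRight_apply,
    finSigmaFinEquiv_apply]
  exact ⟨Nat.le_add_right _ _, Nat.add_lt_add_left this _⟩

theorem exists_involutive_color_ne_of_two_mul_card_fiber_lt {β : Type*} [Fintype β] {k : ℕ}
    (c : β → Fin k) (heven : Even (Fintype.card β))
    (hsmall : ∀ i, 2 * Fintype.card {b // c b = i} < Fintype.card β) :
    ∃ g : β → β, Involutive g ∧ (∀ b, g b ≠ b) ∧ ∀ b, c (g b) ≠ c b := by
  obtain ⟨m, hm⟩ := heven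
  obtain ⟨e, he⟩ := exists_equiv_fin_fiber_interval c
  refine exists_involutive_color_ne_of_equiv_fin c (e.trans (finCongr (two_mul m ▸ hm)))
    fun b b' h => ?_
  obtain ⟨a, ha⟩ := he (c b)
  have := ha b rfl
  have := ha b' h.symm
  have := hsmall (c b)
  simp only [Equiv.trans_apply, finCongr_apply, Fin.val_cast]
  omega

theorem exists_index_eq_iff_mem {α ι : Type*} [DecidableEq α] [Fintype ι] {H : ι → Finset α}
    (hdisj : Pairwise (Disjoint on H)) :
    ∃ c : Finset.univ.biUnion H → ι, ∀ x i, c x = i ↔ x.1 ∈ H i := by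
  have hcover : ∀ x : Finset.univ.biUnion H, ∃ i, x.1 ∈ H i := fun x =>
    (Finset.mem_biUnion.mp x.2).imp fun _ => And.right
  choose c hc using hcover
  refine ⟨c, fun x i => ⟨fun h => h ▸ hc x, fun hx => ?_⟩⟩
  by_contra h
  exact Finset.disjoint_left.mp (hdisj h) (hc x) hx

theorem pairing_of_disjoint_sets_general {α : Type*} [DecidableEq α] {k : ℕ}
    (H : Fin k → Finset α)
    (hdisj : ∀ i j, i ≠ j → Disjoint (H i) (H j))
    (heven : Even (Finset.univ.biUnion H).card)
    (hsize : ∀ i, 2 * (H i).card < (Finset.univ.biUnion H).card) :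
    ∃ f : α → α, ∀ x ∈ Finset.univ.biUnion H,
      f x ∈ Finset.univ.biUnion H ∧ f (f x) = x ∧ f x ≠ x ∧
        ∀ i, x ∈ H i → f x ∉ H i := by
  obtain ⟨c, hc⟩ := exists_index_eq_iff_mem hdisj
  have hfiber (i) : Fintype.card {x // c x = i} = (H i).card :=
    (Fintype.card_congr <| (Equiv.subtypeEquivRight fun x => hc x i).trans <|
      Equiv.subtypeSubtypeEquivSubtype fun hx => Finset.mem_biUnion.mpr ⟨i, by simp, hx⟩).trans
      (Fintype.card_coe _)
  obtain ⟨g, hg_inv, hg_ne, hg_col⟩ := exists_involutive_color_ne_of_two_mul_card_fiber_lt c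
    (by simpa using heven) fun i => by simpa [hfiber] using hsize i
  refine ⟨fun x => if hx : x ∈ Finset.univ.biUnion H then g ⟨x, hx⟩ else x,
    fun x hx => ?_⟩
  have hgx := (g ⟨x, hx⟩).2
  simp only [dif_pos hx, dif_pos hgx]
  exact ⟨hgx, congrArg Subtype.val (hg_inv _), fun h => hg_ne _ (Subtype.ext h),
    fun i hi hgi => hg_col _ (((hc _ i).2 hgi).trans ((hc _ i).2 hi).symm)⟩

/-- Pairwise disjoint finite sets `H₁, …, H_k` whose union `H` has even
cardinality and satisfies `2|Hᵢ| < |H|` for all `i` admit a pairing of the elements of `H`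
(a fixed-point-free involution) such that no pair lies inside a single `Hᵢ`. -/
theorem pairing_of_disjoint_sets {α : Type*} [DecidableEq α] {k : ℕ} (hk : 2 ≤ k)
    (H : Fin k → Finset α)
    (hdisj : ∀ i j, i ≠ j → Disjoint (H i) (H j))
    (heven : Even (Finset.univ.biUnion H).card)
    (hsize : ∀ i, 2 * (H i).card < (Finset.univ.biUnion H).card) :
    ∃ f : α → α, ∀ x ∈ Finset.univ.biUnion H,
      f x ∈ Finset.univ.biUnion H ∧ f (f x) = x ∧ f x ≠ x ∧
        ∀ i, x ∈ H i → f x ∉ H i :=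
  pairing_of_disjoint_sets_general H hdisj heven hsize
end

section
/- Let G and H be Class 1 simple graphs, each with at least one edge. Then the Cartesian product G □ H is Class 1; more precisely, Δ(G □ H) = Δ(G) + Δ(H) and G □ H admits a proper edge coloring with Δ(G) + Δ(H) colors, so χ'(G □ H) = Δ(G) + Δ(H). -/
open SimpleGraph
open scoped Classical

/-! Color the `G`-edges of `G □ H` by a proper `Δ(G)`-coloring of `G` and the `H`-edges by a
proper `Δ(H)`-coloring of `H` on a disjoint palette. Two edges at a common vertex either lie in
the same copy of a factor, where that factor's coloring separates them, or come from different
palettes. Since `Δ(G □ H) = Δ(G) + Δ(H)` and always `Δ ≤ χ'`, this coloring is optimal. -/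

section EdgeColoring

variable {V : Type*} {G : SimpleGraph V} {n : ℕ} {c : Sym2 V → Fin n}

theorem isProperEdgeColoring_iff :
    IsProperEdgeColoring G c ↔
      ∀ ⦃v w w'⦄, G.Adj v w → G.Adj v w' → w ≠ w' → c s(v, w) ≠ c s(v, w') := by
  refine ⟨fun hc v w w' hw hw' hne => ?_, fun hc e he f hf hef ⟨v, hve, hvf⟩ => ?_⟩
  · exact hc _ hw _ hw' (mt Sym2.congr_right.mp hne)
      ⟨v, Sym2.mem_mk_left _ _, Sym2.mem_mk_left _ _⟩
  · obtain ⟨w, rfl⟩ := Sym2.mem_iff_exists.mp hve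
    obtain ⟨w', rfl⟩ := Sym2.mem_iff_exists.mp hvf
    exact hc he hf (fun h => hef (h ▸ rfl))

theorem IsProperEdgeColoring.injOn_neighborSet (hc : IsProperEdgeColoring G c) (v : V) :
    Set.InjOn (fun w => c s(v, w)) (G.neighborSet v) := fun _ hw _ hw' h =>
  of_not_not fun hne => isProperEdgeColoring_iff.mp hc hw hw' hne h

theorem IsProperEdgeColoring.maxDegree_le [Fintype V] (hc : IsProperEdgeColoring G c) :
    G.maxDegree ≤ n :=
  G.maxDegree_le_of_forall_degree_le _ fun v => by
    have hinj : Set.InjOn (fun w => c s(v, w)) (G.neighborFinset v) := by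
      simpa using hc.injOn_neighborSet v
    simpa using Finset.card_le_card_of_injOn _ (fun _ _ => Finset.mem_univ _) hinj

theorem IsProperEdgeColoring.chromIndex_le (hc : IsProperEdgeColoring G c) : chromIndex G ≤ n :=
  Nat.sInf_le ⟨c, hc⟩

end EdgeColoring

section ChromIndex

variable {V : Type*} [Fintype V] (G : SimpleGraph V)

theorem exists_isProperEdgeColoring_chromIndex :
    ∃ c : Sym2 V → Fin (chromIndex G), IsProperEdgeColoring G c := by
  let e := Fintype.equivFin (Sym2 V)
  have he : IsProperEdgeColoring G e := fun _ _ _ _ hne _ h => hne (e.injective h)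
  exact Nat.sInf_mem (s := {n | ∃ c : Sym2 V → Fin n, IsProperEdgeColoring G c}) ⟨_, e, he⟩

theorem maxDegree_le_chromIndex : G.maxDegree ≤ chromIndex G :=
  (exists_isProperEdgeColoring_chromIndex G).choose_spec.maxDegree_le

theorem IsClassOne.exists_isProperEdgeColoring {G : SimpleGraph V} (hG : IsClassOne G) :
    ∃ c : Sym2 V → Fin G.maxDegree, IsProperEdgeColoring G c :=
  hG ▸ exists_isProperEdgeColoring_chromIndex G

end ChromIndex

section BoxProd

variable {α β : Type*} {G : SimpleGraph α} {H : SimpleGraph β}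

theorem maxDegree_boxProd [Fintype α] [Fintype β] [Nonempty α] [Nonempty β] :
    (G □ H).maxDegree = G.maxDegree + H.maxDegree := by
  obtain ⟨a, ha⟩ := G.exists_maximal_degree_vertex
  obtain ⟨b, hb⟩ := H.exists_maximal_degree_vertex
  refine le_antisymm ((G □ H).maxDegree_le_of_forall_degree_le _ fun x => ?_) ?_
  · rw [degree_boxProd]
    exact add_le_add (G.degree_le_maxDegree _) (H.degree_le_maxDegree _)
  · simpa [ha, hb, degree_boxProd] using (G □ H).degree_le_maxDegree (a, b)

variable {m n : ℕ}

theorem Fin.castAdd_ne_natAdd (i : Fin m) (j : Fin n) : Fin.castAdd n i ≠ Fin.natAdd m j :=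
  Fin.ne_of_val_ne (by simp only [Fin.val_castAdd, Fin.val_natAdd]; omega)

noncomputable def boxProdEdgeColoring (cG : Sym2 α → Fin m) (cH : Sym2 β → Fin n) :
    Sym2 (α × β) → Fin (m + n) := fun e =>
  if (e.map Prod.fst).IsDiag then Fin.natAdd m (cH (e.map Prod.snd))
  else Fin.castAdd n (cG (e.map Prod.fst))

@[simp]
theorem boxProdEdgeColoring_mk (cG : Sym2 α → Fin m) (cH : Sym2 β → Fin n) (x y : α × β) :
    boxProdEdgeColoring cG cH s(x, y) =
      if x.1 = y.1 then Fin.natAdd m (cH s(x.2, y.2))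
      else Fin.castAdd n (cG s(x.1, y.1)) := by
  simp [boxProdEdgeColoring]

theorem IsProperEdgeColoring.boxProd {cG : Sym2 α → Fin m} {cH : Sym2 β → Fin n}
    (hcG : IsProperEdgeColoring G cG) (hcH : IsProperEdgeColoring H cH) :
    IsProperEdgeColoring (G □ H) (boxProdEdgeColoring cG cH) := by
  rw [isProperEdgeColoring_iff] at hcG hcH ⊢
  rintro ⟨a, b⟩ ⟨a₁, b₁⟩ ⟨a₂, b₂⟩ h₁ h₂ hne
  simp only [boxProd_adj] at h₁ h₂
  rcases h₁ with ⟨hG₁, rfl⟩ | ⟨hH₁, rfl⟩ <;> rcases h₂ with ⟨hG₂, rfl⟩ | ⟨hH₂, rfl⟩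
  · have ha : a₁ ≠ a₂ := fun h => hne (h ▸ rfl)
    simpa [hG₁.ne, hG₂.ne] using hcG hG₁ hG₂ ha
  · simpa [hG₁.ne] using Fin.castAdd_ne_natAdd _ _
  · simpa [hG₂.ne] using (Fin.castAdd_ne_natAdd _ _).symm
  · have hb : b₁ ≠ b₂ := fun h => hne (h ▸ rfl)
    simpa [Fin.ext_iff] using hcH hH₁ hH₂ hb

end BoxProd

/-- The Cartesian product of two Class 1 graphs, each with at least one
edge, is Class 1: `Δ(G □ H) = Δ(G) + Δ(H)`, the product admits a proper edge coloring with
`Δ(G) + Δ(H)` colors, and so `χ'(G □ H) = Δ(G) + Δ(H)`. -/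
theorem boxProd_classOne {α β : Type*} [Fintype α] [Fintype β]
    (G : SimpleGraph α) (H : SimpleGraph β)
    (hG : IsClassOne G) (hH : IsClassOne H)
    (hGe : G.edgeSet.Nonempty) (hHe : H.edgeSet.Nonempty) :
    (G □ H).maxDegree = G.maxDegree + H.maxDegree ∧
    (∃ c : Sym2 (α × β) → Fin (G.maxDegree + H.maxDegree),
      IsProperEdgeColoring (G □ H) c) ∧
    chromIndex (G □ H) = G.maxDegree + H.maxDegree := by
  have : Nonempty α := ⟨hGe.some.out.1⟩
  have : Nonempty β := ⟨hHe.some.out.1⟩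
  obtain ⟨cG, hcG⟩ := hG.exists_isProperEdgeColoring
  obtain ⟨cH, hcH⟩ := hH.exists_isProperEdgeColoring
  have hΔ : (G □ H).maxDegree = G.maxDegree + H.maxDegree := maxDegree_boxProd
  have hc := hcG.boxProd hcH
  have hχ : chromIndex (G □ H) = G.maxDegree + H.maxDegree :=
    hc.chromIndex_le.antisymm (hΔ ▸ maxDegree_le_chromIndex (G □ H))
  exact ⟨hΔ, ⟨_, hc⟩, hχ⟩
end
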